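/- arXiv:1312.2050 — 7 statements merged into one kernel-verified Lean document; each statement's English description precedes it below -/
import Mathlib

section
/- Let Θ be an n×K membership matrix with community sizes n_1,...,n_K all positive, B a symmetric full-rank K×K real matrix, and P = Θ B Θ^T. If P = U D U^T is an eigendecomposition with U ∈ ℝ^{n×K} having orthonormal columns and D ∈ ℝ^{K×K} diagonal (using the K nonzero eigenvalues), then there exists X ∈ ℝ^{K×K} such that U = Θ X and for all 1 ≤ k < ℓ ≤ K, ‖X_{k*} − X_{ℓ*}‖ = √(1/n_k + 1/n_ℓ), where X_{k*} denotes the k-th row of X. -/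
/-! Because `Uᵀ U = 1` and `D` is invertible, `U = (U D Uᵀ) U D⁻¹ = Θ (B Θᵀ U D⁻¹)`, so `U = Θ X`.
Then `1 = Uᵀ U = Xᵀ Δ X` with `Δ = Θᵀ Θ = diag(n_k)`; as `X` is square, this forces `X Xᵀ = Δ⁻¹`:
the rows of `X` are orthogonal with squared lengths `1 / n_k`, which gives the distances. -/

open Matrix

namespace Matrix

variable {m n p R : Type*}

theorem IsDiag.isUnit [Fintype m] [DecidableEq m] [CommRing R] {D : Matrix m m R} (hD : D.IsDiag)
    (hdiag : ∀ k, IsUnit (D k k)) : IsUnit D :=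
  hD.diagonal_diag ▸ isUnit_diagonal.mpr (Pi.isUnit_iff.mpr hdiag)

theorem eq_mul_of_mul_eq_mul_mul_transpose [Fintype m] [Fintype n] [Fintype p] [DecidableEq n]
    [CommRing R] {A : Matrix m p R} {C : Matrix p m R}
    {U : Matrix m n R} {D : Matrix n n R} (hU : Uᵀ * U = 1) (hD : IsUnit D)
    (h : A * C = U * D * Uᵀ) : U = A * (C * U * D⁻¹) := by
  have hDinv : D * D⁻¹ = 1 := mul_nonsing_inv D ((isUnit_iff_isUnit_det D).mp hD)
  calc U = U * D * (Uᵀ * U) * D⁻¹ := by rw [hU, Matrix.mul_one, Matrix.mul_assoc, hDinv,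
          Matrix.mul_one]
    _ = U * D * Uᵀ * U * D⁻¹ := by simp only [Matrix.mul_assoc]
    _ = A * (C * U * D⁻¹) := by rw [← h]; simp only [Matrix.mul_assoc]

theorem transpose_mul_self_eq_diagonal_card [Fintype n] [DecidableEq m] [Semiring R] {g : n → m}
    {Θ : Matrix n m R} (hΘ : ∀ i k, Θ i k = if g i = k then 1 else 0) :
    Θᵀ * Θ = diagonal fun k => ((Finset.univ.filter fun i => g i = k).card : R) := by
  ext k l
  by_cases hkl : k = l
  · subst hkl
    simp only [mul_apply, transpose_apply, hΘ, diagonal_apply_eq, mul_ite, mul_one, mul_zero,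
      ← ite_and, and_self, Finset.sum_boole]
  · simp only [mul_apply, transpose_apply, hΘ, diagonal_apply_ne _ hkl]
    refine Finset.sum_eq_zero fun i _ => ?_
    split_ifs with hk hl <;> simp_all

theorem mul_transpose_eq_diagonal_inv [Fintype n] [DecidableEq n] [Field R] {X : Matrix n n R}
    {d : n → R} (hd : ∀ i, d i ≠ 0) (h : Xᵀ * diagonal d * X = 1) : X * Xᵀ = diagonal d⁻¹ := by
  have hright : X * (Xᵀ * diagonal d) = 1 := mul_eq_one_comm.mp h
  have hdd : diagonal d * diagonal d⁻¹ = 1 := by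
    rw [diagonal_mul_diagonal, ← diagonal_one]
    exact congrArg diagonal (funext fun i => mul_inv_cancel₀ (hd i))
  calc X * Xᵀ = X * Xᵀ * (diagonal d * diagonal d⁻¹) := by rw [hdd, Matrix.mul_one]
    _ = diagonal d⁻¹ := by rw [← Matrix.mul_assoc, Matrix.mul_assoc X, hright, Matrix.one_mul]

theorem sum_sq_sub_rows [Fintype n] [CommRing R] (X : Matrix m n R) (k l : m) :
    ∑ j, (X k j - X l j) ^ 2 = (X * Xᵀ) k k - 2 * (X * Xᵀ) k l + (X * Xᵀ) l l := by
  simp only [mul_apply, transpose_apply, Finset.mul_sum, ← Finset.sum_sub_distrib,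
    ← Finset.sum_add_distrib]
  exact Finset.sum_congr rfl fun j _ => by ring

end Matrix

theorem stmt1_general (n K : ℕ) (g : Fin n → Fin K)
    (Θ : Matrix (Fin n) (Fin K) ℝ)
    (hΘ : ∀ i k, Θ i k = if g i = k then 1 else 0)
    (nk : Fin K → ℕ)
    (hnk : ∀ k, nk k = (Finset.univ.filter (fun i => g i = k)).card)
    (hpos : ∀ k, 0 < nk k)
    (B : Matrix (Fin K) (Fin K) ℝ)
    (U : Matrix (Fin n) (Fin K) ℝ) (D : Matrix (Fin K) (Fin K) ℝ)
    (hDdiag : ∀ k l, k ≠ l → D k l = 0) (hDnz : ∀ k, D k k ≠ 0)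
    (hUorth : Uᵀ * U = 1)
    (hP : Θ * B * Θᵀ = U * D * Uᵀ) :
    ∃ X : Matrix (Fin K) (Fin K) ℝ, U = Θ * X ∧
      ∀ k l : Fin K, k < l →
        Real.sqrt (∑ j, (X k j - X l j) ^ 2)
          = Real.sqrt ((nk k : ℝ)⁻¹ + (nk l : ℝ)⁻¹) := by
  have hUX : U = Θ * (B * Θᵀ * U * D⁻¹) :=
    eq_mul_of_mul_eq_mul_mul_transpose hUorth
      (IsDiag.isUnit hDdiag fun k => (hDnz k).isUnit) (by rw [← Matrix.mul_assoc, hP])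
  set X := B * Θᵀ * U * D⁻¹
  have hΔ : Θᵀ * Θ = diagonal fun k => (nk k : ℝ) := by
    rw [transpose_mul_self_eq_diagonal_card hΘ]
    simp only [hnk]
  have hXXt : X * Xᵀ = diagonal (fun k => (nk k : ℝ))⁻¹ := by
    refine mul_transpose_eq_diagonal_inv (fun k => by exact_mod_cast (hpos k).ne') ?_
    rw [hUX, transpose_mul] at hUorth
    rw [← hΔ]
    simpa only [Matrix.mul_assoc] using hUorth
  refine ⟨X, hUX, fun k l hkl => ?_⟩
  rw [sum_sq_sub_rows, hXXt, diagonal_apply_ne _ hkl.ne]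
  simp only [diagonal_apply_eq, Pi.inv_apply]
  congr 1
  ring

/-- Eigenvector structure of SBM mean matrix. -/
theorem stmt1 (n K : ℕ) (g : Fin n → Fin K)
    (Θ : Matrix (Fin n) (Fin K) ℝ)
    (hΘ : ∀ i k, Θ i k = if g i = k then 1 else 0)
    (nk : Fin K → ℕ)
    (hnk : ∀ k, nk k = (Finset.univ.filter (fun i => g i = k)).card)
    (hpos : ∀ k, 0 < nk k)
    (B : Matrix (Fin K) (Fin K) ℝ) (hBsymm : B.IsSymm) (hBrank : IsUnit B.det)
    (U : Matrix (Fin n) (Fin K) ℝ) (D : Matrix (Fin K) (Fin K) ℝ)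
    (hDdiag : ∀ k l, k ≠ l → D k l = 0) (hDnz : ∀ k, D k k ≠ 0)
    (hUorth : Uᵀ * U = 1)
    (hP : Θ * B * Θᵀ = U * D * Uᵀ) :
    ∃ X : Matrix (Fin K) (Fin K) ℝ, U = Θ * X ∧
      ∀ k l : Fin K, k < l →
        Real.sqrt (∑ j, (X k j - X l j) ^ 2)
          = Real.sqrt ((nk k : ℝ)⁻¹ + (nk l : ℝ)⁻¹) :=
  stmt1_general n K g Θ hΘ nk hnk hpos B U D hDdiag hDnz hUorth hP
end

section
/- Let Θ be an n×K membership matrix, B a symmetric full-rank K×K matrix, and Δ = diag(√n_1,...,√n_K) with all n_k > 0. If Z D Z^T is an eigendecomposition of ΔBΔ (with Z orthogonal, D diagonal), then P := ΘBΘ^T = UDU^T where U = ΘΔ^{-1}Z has orthonormal columns; moreover the rows of Δ^{-1}Z are pairwise orthogonal and the k-th row of Δ^{-1}Z has Euclidean norm 1/√n_k. -/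
open Matrix

/-!
Since `Θᵀ Θ = Δ²`, the matrix `Θ Δ⁻¹` has orthonormal columns, and so does `Θ Δ⁻¹ Z`.
Conjugating `Δ B Δ = Z D Zᵀ` by `Δ⁻¹` and multiplying by `Θ` on both sides gives the
eigendecomposition of `Θ B Θᵀ`. The rows of `Δ⁻¹ Z` have Gram matrix
`Δ⁻¹ Z Zᵀ Δ⁻¹ = Δ⁻²`, which is diagonal with entries `1 / n_k`.
-/

namespace Matrix

variable {ι κ R : Type*}

theorem transpose_mul_self_of_membership [Fintype ι] [DecidableEq κ] [Semiring R]
    (g : ι → κ) (Θ : Matrix ι κ R) (hΘ : ∀ i k, Θ i k = if g i = k then 1 else 0) :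
    Θᵀ * Θ = diagonal fun k => ((Finset.univ.filter fun i => g i = k).card : R) := by
  ext k l
  simp only [mul_apply, transpose_apply, hΘ, diagonal_apply, mul_ite, mul_one, mul_zero]
  split_ifs with hkl
  · subst hkl
    simp [Finset.sum_ite, Finset.filter_filter]
  · refine Finset.sum_eq_zero fun i _ => ?_
    split_ifs with hl hk <;> simp_all

theorem inv_diagonal_of_ne_zero [Fintype κ] [DecidableEq κ] [Field R] {v : κ → R}
    (hv : ∀ k, v k ≠ 0) : (diagonal v)⁻¹ = diagonal fun k => (v k)⁻¹ := by
  refine inv_eq_left_inv ?_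
  rw [diagonal_mul_diagonal, ← diagonal_one]
  exact congrArg diagonal (funext fun k => inv_mul_cancel₀ (hv k))

variable [Fintype κ] [DecidableEq κ] [CommRing R]

theorem mul_transpose_mul_eq_of_conj_eq [Fintype ι] {Θ : Matrix ι κ R}
    {B Δ Z D : Matrix κ κ R} (hΔ : IsUnit Δ.det) (hΔsymm : Δ.IsSymm)
    (hdecomp : Δ * B * Δ = Z * D * Zᵀ) :
    Θ * B * Θᵀ = (Θ * Δ⁻¹ * Z) * D * (Θ * Δ⁻¹ * Z)ᵀ := by
  have hB : B = Δ⁻¹ * (Z * D * Zᵀ) * Δ⁻¹ := by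
    rw [← hdecomp, mul_assoc, mul_assoc, mul_nonsing_inv _ hΔ, mul_one,
      nonsing_inv_mul_cancel_left _ _ hΔ]
  rw [hB, transpose_mul, transpose_mul, hΔsymm.inv.eq]
  simp only [Matrix.mul_assoc]

theorem transpose_mul_self_inv_mul_eq_one [Fintype ι] {Θ : Matrix ι κ R} {Δ Z : Matrix κ κ R}
    (hΔ : IsUnit Δ.det) (hΔsymm : Δ.IsSymm) (hgram : Θᵀ * Θ = Δ * Δ) (hZ : Zᵀ * Z = 1) :
    (Θ * Δ⁻¹ * Z)ᵀ * (Θ * Δ⁻¹ * Z) = 1 := by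
  calc (Θ * Δ⁻¹ * Z)ᵀ * (Θ * Δ⁻¹ * Z) = Zᵀ * (Δ⁻¹ * Δ) * (Δ * Δ⁻¹) * Z := by
        rw [transpose_mul, transpose_mul, hΔsymm.inv.eq]
        simp only [Matrix.mul_assoc]
        rw [← Matrix.mul_assoc Θᵀ, hgram, Matrix.mul_assoc]
    _ = 1 := by rw [nonsing_inv_mul _ hΔ, mul_nonsing_inv _ hΔ, mul_one, mul_one, hZ]

theorem inv_mul_mul_transpose_self {Δ Z : Matrix κ κ R} (hΔsymm : Δ.IsSymm) (hZ : Zᵀ * Z = 1) :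
    (Δ⁻¹ * Z) * (Δ⁻¹ * Z)ᵀ = Δ⁻¹ * Δ⁻¹ := by
  rw [transpose_mul, hΔsymm.inv.eq, mul_assoc, ← mul_assoc Z, mul_eq_one_comm.mp hZ, one_mul]

end Matrix

theorem stmt2_general (n K : ℕ) (g : Fin n → Fin K)
    (Θ : Matrix (Fin n) (Fin K) ℝ)
    (hΘ : ∀ i k, Θ i k = if g i = k then 1 else 0)
    (nk : Fin K → ℕ)
    (hnk : ∀ k, nk k = (Finset.univ.filter (fun i => g i = k)).card)
    (hpos : ∀ k, 0 < nk k)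
    (B : Matrix (Fin K) (Fin K) ℝ)
    (Δ : Matrix (Fin K) (Fin K) ℝ)
    (hΔ : Δ = Matrix.diagonal (fun k => Real.sqrt (nk k)))
    (Z D : Matrix (Fin K) (Fin K) ℝ)
    (hZorth : Zᵀ * Z = 1)
    (hdecomp : Δ * B * Δ = Z * D * Zᵀ) :
    (Θ * B * Θᵀ = (Θ * Δ⁻¹ * Z) * D * (Θ * Δ⁻¹ * Z)ᵀ) ∧
    ((Θ * Δ⁻¹ * Z)ᵀ * (Θ * Δ⁻¹ * Z) = 1) ∧
    (∀ k l : Fin K, k ≠ l → ∑ j, (Δ⁻¹ * Z) k j * (Δ⁻¹ * Z) l j = 0) ∧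
    (∀ k : Fin K, Real.sqrt (∑ j, ((Δ⁻¹ * Z) k j) ^ 2) = 1 / Real.sqrt (nk k)) := by
  have hsqrt : ∀ k, Real.sqrt (nk k) ≠ 0 := fun k =>
    (Real.sqrt_pos.2 (Nat.cast_pos.2 (hpos k))).ne'
  have hΔunit : IsUnit Δ.det := by
    rw [hΔ, det_diagonal]
    exact (Finset.prod_ne_zero_iff.2 fun k _ => hsqrt k).isUnit
  have hΔsymm : Δ.IsSymm := hΔ ▸ isSymm_diagonal _
  have hgram : Θᵀ * Θ = Δ * Δ := by
    rw [transpose_mul_self_of_membership g Θ hΘ, hΔ, diagonal_mul_diagonal]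
    congr 1
    ext k
    rw [Real.mul_self_sqrt (Nat.cast_nonneg _), hnk]
  have hrows : ∀ k l, ∑ j, (Δ⁻¹ * Z) k j * (Δ⁻¹ * Z) l j
      = (diagonal fun k => (Real.sqrt (nk k))⁻¹ * (Real.sqrt (nk k))⁻¹) k l := by
    intro k l
    rw [← diagonal_mul_diagonal, ← inv_diagonal_of_ne_zero hsqrt, ← hΔ,
      ← inv_mul_mul_transpose_self hΔsymm hZorth, mul_apply]
    simp only [transpose_apply]
  refine ⟨mul_transpose_mul_eq_of_conj_eq hΔunit hΔsymm hdecomp,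
    transpose_mul_self_inv_mul_eq_one hΔunit hΔsymm hgram hZorth,
    fun k l hkl => by rw [hrows, diagonal_apply_ne _ hkl], fun k => ?_⟩
  simp only [sq, hrows, diagonal_apply_eq]
  rw [Real.sqrt_mul_self (inv_nonneg.2 (Real.sqrt_nonneg _)), one_div]

/-- Eigendecomposition of P = ΘBΘᵀ from that of ΔBΔ. -/
theorem stmt2 (n K : ℕ) (g : Fin n → Fin K)
    (Θ : Matrix (Fin n) (Fin K) ℝ)
    (hΘ : ∀ i k, Θ i k = if g i = k then 1 else 0)
    (nk : Fin K → ℕ)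
    (hnk : ∀ k, nk k = (Finset.univ.filter (fun i => g i = k)).card)
    (hpos : ∀ k, 0 < nk k)
    (B : Matrix (Fin K) (Fin K) ℝ) (hBsymm : B.IsSymm) (hBrank : IsUnit B.det)
    (Δ : Matrix (Fin K) (Fin K) ℝ)
    (hΔ : Δ = Matrix.diagonal (fun k => Real.sqrt (nk k)))
    (Z D : Matrix (Fin K) (Fin K) ℝ)
    (hZorth : Zᵀ * Z = 1)
    (hDdiag : ∀ k l, k ≠ l → D k l = 0)
    (hdecomp : Δ * B * Δ = Z * D * Zᵀ) :
    (Θ * B * Θᵀ = (Θ * Δ⁻¹ * Z) * D * (Θ * Δ⁻¹ * Z)ᵀ) ∧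
    ((Θ * Δ⁻¹ * Z)ᵀ * (Θ * Δ⁻¹ * Z) = 1) ∧
    (∀ k l : Fin K, k ≠ l → ∑ j, (Δ⁻¹ * Z) k j * (Δ⁻¹ * Z) l j = 0) ∧
    (∀ k : Fin K, Real.sqrt (∑ j, ((Δ⁻¹ * Z) k j) ^ 2) = 1 / Real.sqrt (nk k)) :=
  stmt2_general n K g Θ hΘ nk hnk hpos B Δ hΔ Z D hZorth hdecomp
end

section
/- Let P ∈ ℝ^{n×n} be a symmetric matrix of rank K whose smallest nonzero singular value is at least γ > 0, and let A ∈ ℝ^{n×n} be any symmetric matrix. Let Û, U ∈ ℝ^{n×K} consist of K leading eigenvectors (orthonormal columns corresponding to the K largest-in-absolute-value eigenvalues) of A and P respectively. Then there exists a K×K orthogonal matrix Q such that ‖Û − UQ‖_F ≤ (2√(2K)/γ) ‖A − P‖, where ‖·‖ is the spectral norm and ‖·‖_F the Frobenius norm. -/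
open Matrix

/-- Spectral (ℓ2 operator) norm of a real square matrix. -/
noncomputable def specNorm {n : ℕ} (A : Matrix (Fin n) (Fin n) ℝ) : ℝ :=
  ‖LinearMap.toContinuousLinearMap (Matrix.toEuclideanLin A)‖

/-- Frobenius norm. -/
noncomputable def frobNorm {n K : ℕ} (M : Matrix (Fin n) (Fin K) ℝ) : ℝ :=
  Real.sqrt (∑ i, ∑ j, (M i j) ^ 2)

/-!
Let `ε = ‖A - P‖` and `M = (1 - Û Ûᵀ) U`. Every eigenvalue of `A` outside the leading ones is at
most `ε` in absolute value (Weyl): its eigenvector and the `K` leading ones span a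
`(K + 1)`-dimensional space, which contains a unit vector `x` with `Uᵀ x = 0`, hence `P x = 0`,
and `‖(A - P) x‖ = ‖A x‖` is at least that eigenvalue in absolute value. So `A` has norm at most
`ε` on the range of `1 - Û Ûᵀ`. Since `Û` spans an `A`-invariant subspace and `P U = U D`,
`M D = A M - (1 - Û Ûᵀ) (A - P) U`, and with `|D k k| ≥ γ` and `‖M‖_F ≤ ‖U‖_F = √K` this gives
`γ ‖M‖_F ≤ ε ‖M‖_F + ε √K ≤ 2 ε √K`.

Finally, write `Uᵀ Û = Y Σ Rᵀ` (singular value decomposition) and take `Q = Y Rᵀ`. Then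
`‖Û - U Q‖_F² = 2 ∑ (1 - σᵢ) ≤ 2 ∑ (1 - σᵢ²) = 2 ‖M‖_F²`, because `0 ≤ σᵢ ≤ 1`.
-/

attribute [local instance] Matrix.frobeniusNormedAddCommGroup

namespace DavisKahan

variable {l m ι κ ν : Type*} [Fintype l] [Fintype m] [Fintype ι] [Fintype κ]

theorem frobenius_norm_sq_eq_sum (M : Matrix m ι ℝ) : ‖M‖ ^ 2 = ∑ i, ∑ j, M i j ^ 2 := by
  rw [frobenius_norm_def, ← Real.rpow_natCast, ← Real.rpow_mul (by positivity)]
  norm_num [Real.norm_eq_abs, sq_abs]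

theorem frobNorm_eq_norm {n K : ℕ} (M : Matrix (Fin n) (Fin K) ℝ) : frobNorm M = ‖M‖ := by
  rw [frobNorm, ← frobenius_norm_sq_eq_sum, Real.sqrt_sq (norm_nonneg M)]

theorem frobenius_norm_sq_eq_trace (M : Matrix m ι ℝ) : ‖M‖ ^ 2 = (Mᵀ * M).trace := by
  rw [frobenius_norm_sq_eq_sum, Finset.sum_comm]
  simp [trace, mul_apply, sq]

theorem frobenius_norm_sq_eq_sum_col (M : Matrix m ι ℝ) :
    ‖M‖ ^ 2 = ∑ j, ‖WithLp.toLp 2 (Mᵀ j)‖ ^ 2 := by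
  rw [frobenius_norm_sq_eq_sum, Finset.sum_comm]
  simp [EuclideanSpace.norm_sq_eq, sq_abs]

theorem mul_norm_le_mul_norm_of_abs_le {a b : ℝ} (ha : 0 ≤ a) (hb : 0 ≤ b) {M N : Matrix m ι ℝ}
    (h : ∀ i j, a * |M i j| ≤ b * |N i j|) : a * ‖M‖ ≤ b * ‖N‖ := by
  rw [← sq_le_sq₀ (by positivity) (by positivity), mul_pow, mul_pow, frobenius_norm_sq_eq_sum,
    frobenius_norm_sq_eq_sum, Finset.mul_sum, Finset.mul_sum]
  refine Finset.sum_le_sum fun i _ => ?_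
  rw [Finset.mul_sum, Finset.mul_sum]
  refine Finset.sum_le_sum fun j _ => ?_
  simpa [mul_pow, sq_abs] using pow_le_pow_left₀ (by positivity) (h i j) 2

theorem frobenius_norm_mul_of_transpose_mul_self [DecidableEq m] {U : Matrix l m ℝ}
    (hU : Uᵀ * U = 1) (M : Matrix m ι ℝ) : ‖U * M‖ = ‖M‖ := by
  rw [← sq_eq_sq₀ (norm_nonneg _) (norm_nonneg _), frobenius_norm_sq_eq_trace,
    frobenius_norm_sq_eq_trace, transpose_mul, Matrix.mul_assoc, ← Matrix.mul_assoc Uᵀ, hU,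
    Matrix.one_mul]

theorem frobenius_norm_mul_of_mul_transpose_self [DecidableEq ι] {W : Matrix ι κ ℝ}
    (hW : W * Wᵀ = 1) (M : Matrix m ι ℝ) : ‖M * W‖ = ‖M‖ := by
  rw [← frobenius_norm_transpose, transpose_mul,
    frobenius_norm_mul_of_transpose_mul_self (by rwa [transpose_transpose]),
    frobenius_norm_transpose]

theorem frobenius_norm_of_transpose_mul_self [DecidableEq ι] {U : Matrix m ι ℝ}
    (hU : Uᵀ * U = 1) : ‖U‖ = √(Fintype.card ι) := by
  rw [← Real.sqrt_sq (norm_nonneg U), frobenius_norm_sq_eq_trace, hU, trace_one]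

theorem transpose_mul_self_mul_eq_one [DecidableEq ι] [DecidableEq ν] {W : Matrix m ι ℝ}
    {R : Matrix ι ν ℝ} (hW : Wᵀ * W = 1) (hR : Rᵀ * R = 1) : (W * R)ᵀ * (W * R) = 1 := by
  rw [transpose_mul, Matrix.mul_assoc, ← Matrix.mul_assoc Wᵀ, hW, Matrix.one_mul, hR]

theorem gram_compl_proj_mul [DecidableEq m] [DecidableEq κ] {W : Matrix m κ ℝ}
    (hW : Wᵀ * W = 1) (Z : Matrix m ν ℝ) :
    ((1 - W * Wᵀ) * Z)ᵀ * ((1 - W * Wᵀ) * Z) = Zᵀ * Z - (Wᵀ * Z)ᵀ * (Wᵀ * Z) := by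
  have hWW : ∀ X : Matrix κ ν ℝ, Wᵀ * (W * X) = X := fun X => by
    rw [← Matrix.mul_assoc, hW, Matrix.one_mul]
  simp only [transpose_mul, transpose_sub, transpose_transpose, Matrix.sub_mul, Matrix.mul_sub,
    Matrix.one_mul, Matrix.mul_assoc, hWW]
  abel

theorem frobenius_norm_compl_proj_mul_le [DecidableEq m] [DecidableEq κ] {W : Matrix m κ ℝ}
    (hW : Wᵀ * W = 1) (Z : Matrix m ι ℝ) : ‖(1 - W * Wᵀ) * Z‖ ≤ ‖Z‖ := by
  rw [← sq_le_sq₀ (norm_nonneg _) (norm_nonneg _), frobenius_norm_sq_eq_trace,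
    gram_compl_proj_mul hW, trace_sub, ← frobenius_norm_sq_eq_trace,
    ← frobenius_norm_sq_eq_trace]
  nlinarith [sq_nonneg ‖Wᵀ * Z‖]

theorem norm_toLp_mulVec_le_specNorm {n : ℕ} (X : Matrix (Fin n) (Fin n) ℝ) (x : Fin n → ℝ) :
    ‖WithLp.toLp 2 (X *ᵥ x)‖ ≤ specNorm X * ‖WithLp.toLp 2 x‖ :=
  (LinearMap.toContinuousLinearMap (toEuclideanLin X)).le_opNorm (WithLp.toLp 2 x)

theorem frobenius_norm_mul_le_specNorm {n : ℕ} (X : Matrix (Fin n) (Fin n) ℝ)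
    (M : Matrix (Fin n) ι ℝ) : ‖X * M‖ ≤ specNorm X * ‖M‖ := by
  have hX : 0 ≤ specNorm X := norm_nonneg _
  rw [← sq_le_sq₀ (norm_nonneg _) (by positivity), mul_pow, frobenius_norm_sq_eq_sum_col,
    frobenius_norm_sq_eq_sum_col, Finset.mul_sum]
  gcongr with j _
  have hcol : (X * M)ᵀ j = X *ᵥ Mᵀ j := by ext; simp [mul_apply, mulVec, dotProduct]
  rw [hcol, ← mul_pow]
  exact pow_le_pow_left₀ (norm_nonneg _) (norm_toLp_mulVec_le_specNorm X _) 2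

open scoped RealInnerProductSpace in
theorem exists_orthonormalBasis_mulVec_eq_smul [DecidableEq ι] (B : Matrix ι ι ℝ) :
    ∃ (w u : OrthonormalBasis ι ℝ (EuclideanSpace ℝ ι)) (σ : ι → ℝ),
      (∀ i, 0 ≤ σ i) ∧ ∀ i, B *ᵥ w i = σ i • u i := by
  have hG : (Bᵀ * B).IsHermitian := by
    simpa [conjTranspose_eq_transpose_of_trivial] using isHermitian_conjTranspose_mul_self B
  set w := hG.eigenvectorBasis
  set b : ι → EuclideanSpace ℝ ι := fun i => WithLp.toLp 2 (B *ᵥ w i)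
  have hb : Pairwise fun i j => ⟪b i, b j⟫ = 0 := fun i j hij => by
    have hw : w j ⬝ᵥ w i = 0 := by
      simpa [EuclideanSpace.inner_eq_star_dotProduct] using w.orthonormal.2 hij
    calc ⟪b i, b j⟫ = (B *ᵥ w j) ⬝ᵥ (B *ᵥ w i) := by simp [b, EuclideanSpace.inner_toLp_toLp]
      _ = w j ⬝ᵥ ((Bᵀ * B) *ᵥ w i) := by
        rw [← mulVec_mulVec, dotProduct_mulVec (w j : ι → ℝ), vecMul_transpose]
      _ = 0 := by rw [hG.mulVec_eigenvectorBasis, dotProduct_smul, hw, smul_zero]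
  set σ : ι → ℝ := fun i => ‖b i‖
  have hv : Orthonormal ℝ ({i | σ i ≠ 0}.domRestrict fun i => (σ i)⁻¹ • b i) :=
    ⟨fun i => norm_smul_inv_norm (norm_ne_zero_iff.mp i.2), fun i j hij => by
      simp [inner_smul_left, inner_smul_right, hb (Subtype.coe_ne_coe.mpr hij)]⟩
  obtain ⟨u, hu⟩ := hv.exists_orthonormalBasis_extension_of_card_eq (by simp)
  refine ⟨w, u, σ, fun i => norm_nonneg _, fun i => ?_⟩
  by_cases hi : σ i = 0
  · rw [hi, zero_smul]
    exact congrArg WithLp.ofLp (norm_eq_zero.mp hi)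
  · rw [hu i hi, WithLp.ofLp_smul, smul_inv_smul₀ hi]

theorem transpose_mul_self_toMatrix_orthonormalBasis [DecidableEq ι]
    (b : OrthonormalBasis ι ℝ (EuclideanSpace ℝ ι)) :
    ((EuclideanSpace.basisFun ι ℝ).toBasis.toMatrix b)ᵀ *
      (EuclideanSpace.basisFun ι ℝ).toBasis.toMatrix b = 1 := by
  simpa [star_eq_conjTranspose, conjTranspose_eq_transpose_of_trivial] using
    (mem_orthogonalGroup_iff' ι ℝ).mp
      ((EuclideanSpace.basisFun ι ℝ).toMatrix_orthonormalBasis_mem_orthogonal b)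

theorem exists_svd [DecidableEq ι] (B : Matrix ι ι ℝ) :
    ∃ W Y : Matrix ι ι ℝ, ∃ σ : ι → ℝ,
      Wᵀ * W = 1 ∧ Yᵀ * Y = 1 ∧ (∀ i, 0 ≤ σ i) ∧ B * W = Y * diagonal σ := by
  obtain ⟨w, u, σ, hσ, hBw⟩ := exists_orthonormalBasis_mulVec_eq_smul B
  refine ⟨_, _, σ, transpose_mul_self_toMatrix_orthonormalBasis w,
    transpose_mul_self_toMatrix_orthonormalBasis u, hσ, ?_⟩
  ext r i
  rw [mul_diagonal]
  simpa [mul_apply, Module.Basis.toMatrix_apply, mulVec, dotProduct, mul_comm]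
    using congrFun (hBw i) r

theorem frobenius_norm_sub_le_of_transpose_mul_eq_diagonal [DecidableEq m] [DecidableEq ι]
    {W U : Matrix m ι ℝ} (hW : Wᵀ * W = 1) (hU : Uᵀ * U = 1) {σ : ι → ℝ} (hσ : ∀ i, 0 ≤ σ i)
    (hUW : Uᵀ * W = diagonal σ) : ‖W - U‖ ≤ √2 * ‖(1 - W * Wᵀ) * U‖ := by
  have hWU : Wᵀ * U = diagonal σ := by
    rw [← diagonal_transpose, ← hUW, transpose_mul, transpose_transpose]
  have hdiff : (W - U)ᵀ * (W - U) = diagonal fun i => 2 - 2 * σ i := by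
    rw [transpose_sub, Matrix.sub_mul, Matrix.mul_sub, Matrix.mul_sub, hW, hU, hWU, hUW,
      ← diagonal_one, diagonal_sub, diagonal_sub, diagonal_sub]
    congr 1
    ext i
    ring
  have hproj : ((1 - W * Wᵀ) * U)ᵀ * ((1 - W * Wᵀ) * U) = diagonal fun i => 1 - σ i ^ 2 := by
    rw [gram_compl_proj_mul hW, hU, hWU, diagonal_transpose, diagonal_mul_diagonal,
      ← diagonal_one, diagonal_sub]
    simp [sq]
  -- `2 - 2 σ i` is a diagonal entry of the Gram matrix of `W - U`
  have hσ1 : ∀ i, σ i ≤ 1 := fun i => by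
    have h := congrFun (congrFun hdiff i) i
    simp only [mul_apply, transpose_apply, diagonal_apply_eq] at h
    nlinarith [Finset.sum_nonneg fun r (_ : r ∈ Finset.univ) => mul_self_nonneg ((W - U) r i)]
  rw [← sq_le_sq₀ (norm_nonneg _) (by positivity), mul_pow, Real.sq_sqrt zero_le_two,
    frobenius_norm_sq_eq_trace, frobenius_norm_sq_eq_trace, hdiff, hproj, trace_diagonal,
    trace_diagonal, Finset.mul_sum]
  exact Finset.sum_le_sum fun i _ => by nlinarith [hσ i, hσ1 i]

theorem exists_orthogonal_frobenius_norm_sub_mul_le [DecidableEq m] [DecidableEq ι]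
    {W U : Matrix m ι ℝ} (hW : Wᵀ * W = 1) (hU : Uᵀ * U = 1) :
    ∃ Q : Matrix ι ι ℝ, Qᵀ * Q = 1 ∧ ‖W - U * Q‖ ≤ √2 * ‖(1 - W * Wᵀ) * U‖ := by
  obtain ⟨R, Y, σ, hR, hY, hσ, hUWR⟩ := exists_svd (Uᵀ * W)
  have hR' : R * Rᵀ = 1 := mul_eq_one_comm.mp hR
  have hY' : Y * Yᵀ = 1 := mul_eq_one_comm.mp hY
  refine ⟨Y * Rᵀ, transpose_mul_self_mul_eq_one hY (by rwa [transpose_transpose]), ?_⟩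
  have hrot := frobenius_norm_sub_le_of_transpose_mul_eq_diagonal
    (transpose_mul_self_mul_eq_one hW hR) (transpose_mul_self_mul_eq_one hU hY) hσ
    (by rw [transpose_mul, Matrix.mul_assoc, ← Matrix.mul_assoc Uᵀ, hUWR, ← Matrix.mul_assoc, hY,
      Matrix.one_mul])
  have hsub : (W - U * (Y * Rᵀ)) * R = W * R - U * Y := by
    rw [Matrix.sub_mul, Matrix.mul_assoc, Matrix.mul_assoc, hR, Matrix.mul_one]
  have hproj : 1 - W * R * (W * R)ᵀ = 1 - W * Wᵀ := by
    rw [transpose_mul, Matrix.mul_assoc, ← Matrix.mul_assoc R, hR', Matrix.one_mul]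
  calc ‖W - U * (Y * Rᵀ)‖ = ‖W * R - U * Y‖ := by
        rw [← hsub, frobenius_norm_mul_of_mul_transpose_self hR']
    _ ≤ √2 * ‖(1 - W * R * (W * R)ᵀ) * (U * Y)‖ := hrot
    _ = √2 * ‖(1 - W * Wᵀ) * U‖ := by
        rw [hproj, ← Matrix.mul_assoc, frobenius_norm_mul_of_mul_transpose_self hY']

theorem transpose_mul_self_submatrix [DecidableEq m] [DecidableEq ν] {V : Matrix m m ℝ}
    (hV : Vᵀ * V = 1) {g : ν → m} (hg : Function.Injective g) :
    (V.submatrix id g)ᵀ * V.submatrix id g = 1 := by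
  rw [transpose_submatrix, ← submatrix_mul _ _ _ _ _ Function.bijective_id, hV,
    submatrix_one _ hg]

theorem mul_submatrix_eq_submatrix_mul_diagonal [DecidableEq m] [DecidableEq ι]
    {A V : Matrix m m ℝ} {Λ : m → ℝ} (hV : Vᵀ * V = 1) (hAV : A = V * diagonal Λ * Vᵀ)
    (g : ι → m) : A * V.submatrix id g = V.submatrix id g * diagonal (Λ ∘ g) := by
  have hAV' : A * V = V * diagonal Λ := by
    rw [hAV, Matrix.mul_assoc, Matrix.mul_assoc, hV, Matrix.mul_one]
  ext i k
  have h := congrFun (congrFun hAV' i) (g k)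
  rw [mul_diagonal] at h
  rw [mul_diagonal]
  simpa [mul_apply] using h

theorem frobenius_norm_mul_le_of_transpose_submatrix_mul_eq_zero [DecidableEq m]
    {A V : Matrix m m ℝ} {Λ : m → ℝ} (hV : Vᵀ * V = 1) (hAV : A = V * diagonal Λ * Vᵀ)
    {f : κ → m} {ε : ℝ} (hε : 0 ≤ ε) (hΛ : ∀ j ∉ Set.range f, |Λ j| ≤ ε)
    {Z : Matrix m ι ℝ} (hZ : (V.submatrix id f)ᵀ * Z = 0) : ‖A * Z‖ ≤ ε * ‖Z‖ := by
  have hVt : Vᵀᵀ * Vᵀ = 1 := by rw [transpose_transpose, mul_eq_one_comm.mp hV]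
  have hAZ : A * Z = V * (diagonal Λ * (Vᵀ * Z)) := by simp only [hAV, Matrix.mul_assoc]
  have hrow : ∀ k j, (Vᵀ * Z) (f k) j = 0 := fun k j => by
    simpa [mul_apply] using congrFun (congrFun hZ k) j
  rw [hAZ, frobenius_norm_mul_of_transpose_mul_self hV,
    ← frobenius_norm_mul_of_transpose_mul_self hVt Z, ← one_mul ‖diagonal Λ * _‖]
  refine mul_norm_le_mul_norm_of_abs_le zero_le_one hε fun i j => ?_
  rw [diagonal_mul, one_mul, abs_mul]
  by_cases hi : i ∈ Set.range f
  · obtain ⟨k, rfl⟩ := hi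
    simp [hrow]
  · exact mul_le_mul_of_nonneg_right (hΛ i hi) (abs_nonneg _)

theorem exists_ne_zero_mul_eq_zero_of_card_lt {R : Matrix κ ι ℝ}
    (h : Fintype.card κ < Fintype.card ι) : ∃ Y : Matrix ι Unit ℝ, Y ≠ 0 ∧ R * Y = 0 := by
  obtain ⟨y, hy, hy0⟩ := Submodule.exists_mem_ne_zero_of_ne_bot
    (LinearMap.ker_ne_bot_of_finrank_lt (f := R.mulVecLin) (by simpa using h))
  refine ⟨replicateCol Unit y, fun h0 => hy0 ?_, ?_⟩
  · ext i
    simpa using congrFun (congrFun h0 i) ()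
  · rw [← replicateCol_mulVec]
    simpa using hy

theorem le_specNorm_sub_of_card_lt [DecidableEq ι] {n : ℕ} {A P : Matrix (Fin n) (Fin n) ℝ}
    {C : Matrix (Fin n) ι ℝ} {U : Matrix (Fin n) κ ℝ} {D : Matrix κ κ ℝ} {μ : ι → ℝ} {c : ℝ}
    (hC : Cᵀ * C = 1) (hAC : A * C = C * diagonal μ) (hc : 0 ≤ c) (hμ : ∀ i, c ≤ |μ i|)
    (hP : P = U * D * Uᵀ) (hcard : Fintype.card κ < Fintype.card ι) :
    c ≤ specNorm (A - P) := by
  obtain ⟨Y, hY, hUCY⟩ := exists_ne_zero_mul_eq_zero_of_card_lt (R := Uᵀ * C) hcard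
  have hAPCY : (A - P) * (C * Y) = C * (diagonal μ * Y) := by
    rw [hP, Matrix.sub_mul, ← Matrix.mul_assoc, hAC, Matrix.mul_assoc (U * D),
      ← Matrix.mul_assoc Uᵀ, hUCY, Matrix.mul_zero, sub_zero, Matrix.mul_assoc]
  have hlower : c * ‖Y‖ ≤ 1 * ‖diagonal μ * Y‖ :=
    mul_norm_le_mul_norm_of_abs_le hc zero_le_one fun i j => by
      rw [diagonal_mul, one_mul, abs_mul]
      exact mul_le_mul_of_nonneg_right (hμ i) (abs_nonneg _)
  have hupper : ‖diagonal μ * Y‖ ≤ specNorm (A - P) * ‖Y‖ := by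
    rw [← frobenius_norm_mul_of_transpose_mul_self hC, ← hAPCY,
      ← frobenius_norm_mul_of_transpose_mul_self hC Y]
    exact frobenius_norm_mul_le_specNorm _ _
  exact le_of_mul_le_mul_right (by linarith) (norm_pos_iff.mpr hY)

theorem abs_le_specNorm_sub_of_notMem_range {n K : ℕ} {A P V : Matrix (Fin n) (Fin n) ℝ}
    {Λ : Fin n → ℝ} {U : Matrix (Fin n) (Fin K) ℝ} {D : Matrix (Fin K) (Fin K) ℝ}
    {f : Fin K → Fin n} (hV : Vᵀ * V = 1) (hAV : A = V * diagonal Λ * Vᵀ) (hP : P = U * D * Uᵀ)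
    (hf : Function.Injective f)
    (hleading : ∀ (k : Fin K) (j : Fin n), j ∉ Set.range f → |Λ j| ≤ |Λ (f k)|)
    {j : Fin n} (hj : j ∉ Set.range f) : |Λ j| ≤ specNorm (A - P) := by
  have hg : Function.Injective (Fin.cons j f : Fin (K + 1) → Fin n) :=
    Fin.cons_injective_iff.mpr ⟨hj, hf⟩
  refine le_specNorm_sub_of_card_lt (transpose_mul_self_submatrix hV hg)
    (mul_submatrix_eq_submatrix_mul_diagonal hV hAV _) (abs_nonneg _) ?_ hP (by simp)
  exact Fin.cases le_rfl fun k => hleading k j hj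

theorem mul_frobenius_norm_compl_proj_mul_le [DecidableEq ι] [DecidableEq κ] {n : ℕ}
    {A P : Matrix (Fin n) (Fin n) ℝ} {W : Matrix (Fin n) κ ℝ} {U : Matrix (Fin n) ι ℝ}
    {μ : κ → ℝ} {d : ι → ℝ} {γ : ℝ} (hγ : 0 ≤ γ) (hA : A.IsSymm) (hW : Wᵀ * W = 1)
    (hU : Uᵀ * U = 1) (hAW : A * W = W * diagonal μ) (hPU : P * U = U * diagonal d)
    (hd : ∀ k, γ ≤ |d k|)
    (hcompl : ∀ Z : Matrix (Fin n) ι ℝ, Wᵀ * Z = 0 → ‖A * Z‖ ≤ specNorm (A - P) * ‖Z‖) :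
    γ * ‖(1 - W * Wᵀ) * U‖ ≤ 2 * specNorm (A - P) * √(Fintype.card ι) := by
  set ε := specNorm (A - P)
  set M := (1 - W * Wᵀ) * U
  have hε : 0 ≤ ε := norm_nonneg _
  have hWA : Wᵀ * A = diagonal μ * Wᵀ := by
    rw [← hA.eq, ← transpose_mul, hAW, transpose_mul, diagonal_transpose]
  have hcomm : (1 - W * Wᵀ) * A = A * (1 - W * Wᵀ) := by
    rw [Matrix.sub_mul, Matrix.mul_sub, Matrix.one_mul, Matrix.mul_one, Matrix.mul_assoc, hWA,
      ← Matrix.mul_assoc A, hAW, Matrix.mul_assoc]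
  have hMd : M * diagonal d = A * M - (1 - W * Wᵀ) * ((A - P) * U) := by
    have h : (1 - W * Wᵀ) * ((A - P) * U) = A * M - (1 - W * Wᵀ) * (P * U) := by
      rw [Matrix.sub_mul A, Matrix.mul_sub (1 - W * Wᵀ), ← Matrix.mul_assoc _ A, hcomm,
        Matrix.mul_assoc]
    rw [h, sub_sub_cancel, hPU]
    exact Matrix.mul_assoc _ _ _
  have hWM : Wᵀ * M = 0 := by
    rw [← Matrix.mul_assoc, Matrix.mul_sub, Matrix.mul_one, ← Matrix.mul_assoc, hW,
      Matrix.one_mul, sub_self, Matrix.zero_mul]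
  have hU_norm := frobenius_norm_of_transpose_mul_self hU
  have hM : ‖M‖ ≤ √(Fintype.card ι) := hU_norm ▸ frobenius_norm_compl_proj_mul_le hW U
  calc γ * ‖M‖ ≤ 1 * ‖M * diagonal d‖ :=
        mul_norm_le_mul_norm_of_abs_le hγ zero_le_one fun i k => by
          rw [mul_diagonal, one_mul, abs_mul, mul_comm |M i k|]
          exact mul_le_mul_of_nonneg_right (hd k) (abs_nonneg _)
    _ ≤ ‖A * M‖ + ‖(1 - W * Wᵀ) * ((A - P) * U)‖ := by
        rw [one_mul, hMd]
        exact norm_sub_le _ _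
    _ ≤ ε * ‖M‖ + ε * √(Fintype.card ι) := by
        gcongr
        · exact hcompl M hWM
        · exact (frobenius_norm_compl_proj_mul_le hW _).trans
            ((frobenius_norm_mul_le_specNorm _ _).trans_eq (by rw [hU_norm]))
    _ ≤ 2 * ε * √(Fintype.card ι) := by nlinarith

end DavisKahan

open DavisKahan

theorem stmt6_general (n K : ℕ) (γ : ℝ) (hγ : 0 < γ)
    (P A : Matrix (Fin n) (Fin n) ℝ) (hAsymm : A.IsSymm)
    -- rank-K eigendecomposition of P with all nonzero eigenvalues ≥ γ in absolute value
    (U : Matrix (Fin n) (Fin K) ℝ) (D : Matrix (Fin K) (Fin K) ℝ)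
    (hUorth : Uᵀ * U = 1)
    (hDdiag : ∀ k l, k ≠ l → D k l = 0)
    (hDγ : ∀ k, γ ≤ |D k k|)
    (hP : P = U * D * Uᵀ)
    -- full orthogonal eigendecomposition of A
    (V : Matrix (Fin n) (Fin n) ℝ) (Λ : Fin n → ℝ)
    (hVorth : Vᵀ * V = 1)
    (hAV : A = V * Matrix.diagonal Λ * Vᵀ)
    -- Û consists of the K leading eigenvectors of A (largest absolute eigenvalues)
    (f : Fin K → Fin n) (hf : Function.Injective f)
    (hleading : ∀ (k : Fin K) (j : Fin n), j ∉ Set.range f → |Λ j| ≤ |Λ (f k)|)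
    (Uhat : Matrix (Fin n) (Fin K) ℝ) (hUhat : Uhat = V.submatrix id f) :
    ∃ Q : Matrix (Fin K) (Fin K) ℝ, Qᵀ * Q = 1 ∧
      frobNorm (Uhat - U * Q) ≤ (2 * Real.sqrt (2 * K) / γ) * specNorm (A - P) := by
  have hUhat_orth : Uhatᵀ * Uhat = 1 := hUhat ▸ transpose_mul_self_submatrix hVorth hf
  have hAUhat : A * Uhat = Uhat * diagonal (Λ ∘ f) :=
    hUhat ▸ mul_submatrix_eq_submatrix_mul_diagonal hVorth hAV f
  have hPU : P * U = U * diagonal D.diag := by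
    rw [hP, Matrix.mul_assoc, hUorth, Matrix.mul_one,
      (show D.IsDiag from fun k l h => hDdiag k l h).diagonal_diag]
  have hcompl (Z : Matrix (Fin n) (Fin K) ℝ) (hZ : Uhatᵀ * Z = 0) :
      ‖A * Z‖ ≤ specNorm (A - P) * ‖Z‖ :=
    frobenius_norm_mul_le_of_transpose_submatrix_mul_eq_zero hVorth hAV (norm_nonneg _)
      (fun _ hj => abs_le_specNorm_sub_of_notMem_range hVorth hAV hP hf hleading hj) (hUhat ▸ hZ)
  have hsin := mul_frobenius_norm_compl_proj_mul_le hγ.le hAsymm hUhat_orth hUorth hAUhat hPU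
    hDγ hcompl
  rw [Fintype.card_fin] at hsin
  obtain ⟨Q, hQ, hdist⟩ := exists_orthogonal_frobenius_norm_sub_mul_le hUhat_orth hUorth
  refine ⟨Q, hQ, ?_⟩
  calc frobNorm (Uhat - U * Q) ≤ √2 * ‖(1 - Uhat * Uhatᵀ) * U‖ :=
        (frobNorm_eq_norm _).trans_le hdist
    _ ≤ √2 * (2 * specNorm (A - P) * √K / γ) := by
        gcongr
        rwa [le_div_iff₀ hγ, mul_comm]
    _ = 2 * √(2 * K) / γ * specNorm (A - P) := by
        rw [Real.sqrt_mul zero_le_two]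
        ring

/-- Principal subspace perturbation bound. -/
theorem stmt6 (n K : ℕ) (γ : ℝ) (hγ : 0 < γ)
    (P A : Matrix (Fin n) (Fin n) ℝ) (hAsymm : A.IsSymm) (hPsymm : P.IsSymm)
    -- rank-K eigendecomposition of P with all nonzero eigenvalues ≥ γ in absolute value
    (U : Matrix (Fin n) (Fin K) ℝ) (D : Matrix (Fin K) (Fin K) ℝ)
    (hUorth : Uᵀ * U = 1)
    (hDdiag : ∀ k l, k ≠ l → D k l = 0)
    (hDγ : ∀ k, γ ≤ |D k k|)
    (hP : P = U * D * Uᵀ)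
    -- full orthogonal eigendecomposition of A
    (V : Matrix (Fin n) (Fin n) ℝ) (Λ : Fin n → ℝ)
    (hVorth : Vᵀ * V = 1)
    (hAV : A = V * Matrix.diagonal Λ * Vᵀ)
    -- Û consists of the K leading eigenvectors of A (largest absolute eigenvalues)
    (f : Fin K → Fin n) (hf : Function.Injective f)
    (hleading : ∀ (k : Fin K) (j : Fin n), j ∉ Set.range f → |Λ j| ≤ |Λ (f k)|)
    (Uhat : Matrix (Fin n) (Fin K) ℝ) (hUhat : Uhat = V.submatrix id f) :
    ∃ Q : Matrix (Fin K) (Fin K) ℝ, Qᵀ * Q = 1 ∧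
      frobNorm (Uhat - U * Q) ≤ (2 * Real.sqrt (2 * K) / γ) * specNorm (A - P) :=
  stmt6_general n K γ hγ P A hAsymm U D hUorth hDdiag hDγ hP V Λ hVorth hAV f hf hleading Uhat hUhat
end

section
/- Let Û, U ∈ ℝ^{n×K} each have orthonormal columns, with U spanning the rank-K column space of a symmetric matrix P whose smallest nonzero singular value is γ > 0, and Û spanning the K leading eigenvectors of a symmetric matrix A. If ‖A − P‖ ≤ γ/2 (spectral norm), then ‖(I − ÛÛ^T)UU^T‖ ≤ 2‖A − P‖/γ. -/
/-
Write `Q = 1 - Û Ûᵀ` and `ε = ‖A - P‖`. As `P = U D Uᵀ` with `|D k k| ≥ γ`, the matrix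
`R = U D⁻¹ Uᵀ` satisfies `P R = U Uᵀ` and `‖R‖ ≤ 1 / γ`, hence `Q U Uᵀ = Q A R - Q (A - P) R` and
`‖Q U Uᵀ‖ ≤ (‖Q A‖ + ε) / γ`. Since `Q A = V diag(λⱼ, j non-leading) Vᵀ`, it remains to see
`|λⱼ| ≤ ε` for every non-leading eigenvalue (a Weyl inequality): the eigenvectors of `λⱼ` and of
the `K` leading eigenvalues span a `(K + 1)`-dimensional space, which meets `ker Uᵀ ⊆ ker P`;
for `w ≠ 0` in the intersection, `‖(A - P) w‖ = ‖A w‖ ≥ |λⱼ| ‖w‖`.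
-/

open Matrix

open scoped Matrix.Norms.L2Operator
open Function WithLp

theorem specNorm_eq_l2_opNorm {n : ℕ} (A : Matrix (Fin n) (Fin n) ℝ) : specNorm A = ‖A‖ := rfl

theorem norm_toLp_sq_eq_dotProduct {n : Type*} [Fintype n] (v : n → ℝ) :
    ‖toLp 2 v‖ ^ 2 = v ⬝ᵥ v := by
  rw [EuclideanSpace.real_norm_sq_eq]
  simp [dotProduct, sq]

namespace Matrix

variable {m n l : Type*}

theorem l2_opNorm_transpose [Fintype m] [DecidableEq m] [Fintype n] [DecidableEq n]
    (A : Matrix m n ℝ) : ‖Aᵀ‖ = ‖A‖ := by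
  simpa using l2_opNorm_conjTranspose A

theorem l2_opNorm_diagonal_le [Fintype n] [DecidableEq n] {d : n → ℝ} {c : ℝ} (hc : 0 ≤ c)
    (hd : ∀ i, |d i| ≤ c) : ‖diagonal d‖ ≤ c := by
  rw [l2_opNorm_diagonal]
  exact (pi_norm_le_iff_of_nonneg hc).mpr hd

theorem l2_opNorm_le_one_of_transpose_mul_self [Fintype m] [Fintype n] [DecidableEq n]
    {U : Matrix m n ℝ} (hU : Uᵀ * U = 1) : ‖U‖ ≤ 1 := by
  have h : ‖U‖ * ‖U‖ ≤ 1 := by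
    rw [← l2_opNorm_conjTranspose_mul_self, conjTranspose_eq_transpose_of_trivial, hU,
      ← diagonal_one]
    exact l2_opNorm_diagonal_le zero_le_one fun _ => by simp
  nlinarith [norm_nonneg U]

theorem l2_opNorm_mul_diagonal_mul_transpose_le [Fintype m] [DecidableEq m] [Fintype n]
    [DecidableEq n] {U : Matrix m n ℝ} (hU : Uᵀ * U = 1) {d : n → ℝ} {c : ℝ} (hc : 0 ≤ c)
    (hd : ∀ i, |d i| ≤ c) : ‖U * diagonal d * Uᵀ‖ ≤ c := by
  have hU1 := l2_opNorm_le_one_of_transpose_mul_self hU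
  calc ‖U * diagonal d * Uᵀ‖ ≤ ‖U‖ * ‖diagonal d‖ * ‖Uᵀ‖ :=
        (l2_opNorm_mul _ _).trans (by gcongr; exact l2_opNorm_mul _ _)
    _ ≤ 1 * c * 1 := by
        rw [l2_opNorm_transpose]
        gcongr
        exact l2_opNorm_diagonal_le hc hd
    _ = c := by ring

theorem mul_diagonal_mul_transpose_mul_mul_diagonal_mul_transpose [Fintype m] [Fintype n]
    [DecidableEq n] {U : Matrix m n ℝ} (hU : Uᵀ * U = 1) (d e : n → ℝ) :
    U * diagonal d * Uᵀ * (U * diagonal e * Uᵀ) = U * diagonal (d * e) * Uᵀ := by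
  calc _ = U * diagonal d * (Uᵀ * U) * diagonal e * Uᵀ := by simp only [Matrix.mul_assoc]
    _ = _ := by rw [hU, Matrix.mul_one, Matrix.mul_assoc U, diagonal_mul_diagonal]; rfl

theorem norm_toLp_mulVec_le [Fintype m] [DecidableEq m] [Fintype n] [DecidableEq n]
    (M : Matrix m n ℝ) (v : n → ℝ) : ‖toLp 2 (M *ᵥ v)‖ ≤ ‖M‖ * ‖toLp 2 v‖ :=
  M.l2_opNorm_mulVec (toLp 2 v)

theorem norm_toLp_mulVec_of_transpose_mul_self [Fintype m] [Fintype n] [DecidableEq n]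
    {W : Matrix m n ℝ} (hW : Wᵀ * W = 1) (x : n → ℝ) : ‖toLp 2 (W *ᵥ x)‖ = ‖toLp 2 x‖ := by
  rw [← sq_eq_sq₀ (norm_nonneg _) (norm_nonneg _), norm_toLp_sq_eq_dotProduct,
    norm_toLp_sq_eq_dotProduct, dotProduct_mulVec, ← mulVec_transpose, mulVec_mulVec, hW,
    one_mulVec, dotProduct_comm]

theorem mul_norm_toLp_le_norm_toLp_diagonal_mulVec [Fintype n] [DecidableEq n] {μ : n → ℝ}
    {c : ℝ} (hc : 0 ≤ c) (hμ : ∀ i, c ≤ |μ i|) (x : n → ℝ) :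
    c * ‖toLp 2 x‖ ≤ ‖toLp 2 (diagonal μ *ᵥ x)‖ := by
  rw [← sq_le_sq₀ (by positivity) (norm_nonneg _), mul_pow, EuclideanSpace.real_norm_sq_eq,
    EuclideanSpace.real_norm_sq_eq, Finset.mul_sum]
  refine Finset.sum_le_sum fun i _ => ?_
  have hcμ : c ^ 2 ≤ μ i ^ 2 := by
    simpa only [sq_abs] using pow_le_pow_left₀ hc (hμ i) 2
  simp only [mulVec_diagonal, mul_pow]
  exact mul_le_mul_of_nonneg_right hcμ (sq_nonneg _)

/-- A Weyl-type bound; the factorisation `P = B * Uᵀ` stands for `rank P ≤ card l`. -/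
theorem le_l2_opNorm_sub_of_mul_eq_mul_diagonal [Fintype m] [DecidableEq m] [Fintype n]
    [DecidableEq n] [Fintype l] {A P : Matrix m m ℝ} {B U : Matrix m l ℝ} (hP : P = B * Uᵀ)
    {W : Matrix m n ℝ} (hW : Wᵀ * W = 1) {μ : n → ℝ} (hAW : A * W = W * diagonal μ)
    (hcard : Fintype.card l < Fintype.card n) {c : ℝ} (hμ : ∀ i, c ≤ |μ i|) :
    c ≤ ‖A - P‖ := by
  obtain hc | hc := lt_or_ge c 0
  · exact hc.le.trans (norm_nonneg _)
  obtain ⟨x, hx, hx0⟩ : ∃ x ∈ LinearMap.ker (Uᵀ * W).mulVecLin, x ≠ 0 :=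
    Submodule.exists_mem_ne_zero_of_ne_bot <| LinearMap.ker_ne_bot_of_finrank_lt <| by
      rwa [Module.finrank_fintype_fun_eq_card, Module.finrank_fintype_fun_eq_card]
  rw [LinearMap.mem_ker, mulVecLin_apply] at hx
  have hPW : P *ᵥ (W *ᵥ x) = 0 := by
    rw [hP, mulVec_mulVec, Matrix.mul_assoc, ← mulVec_mulVec, hx, mulVec_zero]
  have hAPW : (A - P) *ᵥ (W *ᵥ x) = W *ᵥ (diagonal μ *ᵥ x) := by
    rw [sub_mulVec, hPW, sub_zero, mulVec_mulVec, hAW, ← mulVec_mulVec]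
  have hx_pos : 0 < ‖toLp 2 x‖ := norm_pos_iff.mpr (by simpa using hx0)
  refine le_of_mul_le_mul_right ?_ hx_pos
  calc c * ‖toLp 2 x‖ ≤ ‖toLp 2 (diagonal μ *ᵥ x)‖ :=
        mul_norm_toLp_le_norm_toLp_diagonal_mulVec hc hμ x
    _ = ‖toLp 2 ((A - P) *ᵥ (W *ᵥ x))‖ := by
        rw [hAPW, norm_toLp_mulVec_of_transpose_mul_self hW]
    _ ≤ ‖A - P‖ * ‖toLp 2 (W *ᵥ x)‖ := norm_toLp_mulVec_le _ _
    _ = ‖A - P‖ * ‖toLp 2 x‖ := by rw [norm_toLp_mulVec_of_transpose_mul_self hW]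

theorem transpose_mul_self_submatrix_id [Fintype m] [DecidableEq n] [DecidableEq l]
    {V : Matrix m n ℝ} (hV : Vᵀ * V = 1) {g : l → n} (hg : Injective g) :
    (V.submatrix id g)ᵀ * V.submatrix id g = 1 := by
  rw [transpose_submatrix, ← submatrix_mul _ _ _ _ _ Function.bijective_id, hV,
    submatrix_one g hg]

theorem mul_submatrix_id_eq_submatrix_id_mul_diagonal [Fintype m] [DecidableEq m] [Fintype l]
    [DecidableEq l] {V A : Matrix m m ℝ} (Λ : m → ℝ) (hAV : A * V = V * diagonal Λ) (g : l → m) :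
    A * V.submatrix id g = V.submatrix id g * diagonal (Λ ∘ g) := by
  ext i j
  have hij := congrFun (congrFun hAV i) (g j)
  rw [mul_diagonal] at hij
  rw [mul_diagonal]
  simpa [mul_apply] using hij

theorem submatrix_id_mul_transpose_submatrix_id [Fintype n] [DecidableEq n] [Fintype l]
    (V : Matrix m n ℝ) {f : l → n} (hf : Injective f) :
    V.submatrix id f * (V.submatrix id f)ᵀ
      = V * diagonal ((Set.range f).indicator (1 : n → ℝ)) * Vᵀ := by
  classical
  ext i i'
  rw [mul_apply, mul_apply]
  simp only [mul_diagonal, submatrix_apply, transpose_apply, id, Set.indicator_apply,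
    Pi.one_apply, mul_ite, mul_one, mul_zero, ite_mul, zero_mul]
  rw [← Finset.sum_filter, show Finset.univ.filter (· ∈ Set.range f) = Finset.univ.image f by
    ext; simp, Finset.sum_image hf.injOn]

theorem one_sub_submatrix_id_mul_transpose_submatrix_id [Fintype m] [DecidableEq m] [Fintype l]
    {V : Matrix m m ℝ} (hV : Vᵀ * V = 1) {f : l → m} (hf : Injective f) :
    1 - V.submatrix id f * (V.submatrix id f)ᵀ
      = V * diagonal ((Set.range f)ᶜ.indicator (1 : m → ℝ)) * Vᵀ := by
  have hdiag : diagonal (1 - (Set.range f).indicator (1 : m → ℝ))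
      = 1 - diagonal ((Set.range f).indicator 1) := by
    rw [← diagonal_one, diagonal_sub]
    rfl
  rw [submatrix_id_mul_transpose_submatrix_id V hf, Set.indicator_compl, hdiag, Matrix.mul_sub,
    Matrix.sub_mul, Matrix.mul_one, mul_eq_one_comm.mp hV]

theorem abs_le_l2_opNorm_sub_of_notMem_range [Fintype m] [DecidableEq m] [Fintype l]
    {A P V : Matrix m m ℝ} {B U : Matrix m l ℝ} (hP : P = B * Uᵀ) (hV : Vᵀ * V = 1)
    {Λ : m → ℝ} (hA : A = V * diagonal Λ * Vᵀ) {f : l → m} (hf : Injective f)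
    (hleading : ∀ i j, j ∉ Set.range f → |Λ j| ≤ |Λ (f i)|) {j : m} (hj : j ∉ Set.range f) :
    |Λ j| ≤ ‖A - P‖ := by
  set s := insert j (Finset.univ.image f)
  have hcard : Fintype.card l < Fintype.card s := by
    rw [Fintype.card_coe, Finset.card_insert_of_notMem (by simpa using hj),
      Finset.card_image_of_injective _ hf, Finset.card_univ]
    omega
  have hAV : A * V = V * diagonal Λ := by
    rw [hA, Matrix.mul_assoc (V * diagonal Λ), hV, Matrix.mul_one]
  refine le_l2_opNorm_sub_of_mul_eq_mul_diagonal hP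
    (transpose_mul_self_submatrix_id hV Subtype.val_injective)
    (mul_submatrix_id_eq_submatrix_id_mul_diagonal Λ hAV _) hcard fun ⟨i, hi⟩ => ?_
  change |Λ j| ≤ |Λ i|
  rcases Finset.mem_insert.mp hi with rfl | hi
  · exact le_rfl
  · obtain ⟨i, -, rfl⟩ := Finset.mem_image.mp hi
    exact hleading i j hj

theorem l2_opNorm_one_sub_submatrix_id_mul_transpose_le_one [Fintype m] [DecidableEq m]
    [Fintype l] {V : Matrix m m ℝ} (hV : Vᵀ * V = 1) {f : l → m} (hf : Injective f) :
    ‖1 - V.submatrix id f * (V.submatrix id f)ᵀ‖ ≤ 1 := by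
  rw [one_sub_submatrix_id_mul_transpose_submatrix_id hV hf]
  exact l2_opNorm_mul_diagonal_mul_transpose_le hV zero_le_one fun i => by
    by_cases hi : i ∈ Set.range f <;> simp [hi]

theorem l2_opNorm_one_sub_submatrix_id_mul_transpose_mul_le [Fintype m] [DecidableEq m]
    [Fintype l] {A P V : Matrix m m ℝ} {B U : Matrix m l ℝ} (hP : P = B * Uᵀ) (hV : Vᵀ * V = 1)
    {Λ : m → ℝ} (hA : A = V * diagonal Λ * Vᵀ) {f : l → m} (hf : Injective f)
    (hleading : ∀ i j, j ∉ Set.range f → |Λ j| ≤ |Λ (f i)|) :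
    ‖(1 - V.submatrix id f * (V.submatrix id f)ᵀ) * A‖ ≤ ‖A - P‖ := by
  have hQA : (1 - V.submatrix id f * (V.submatrix id f)ᵀ) * A
      = V * diagonal ((Set.range f)ᶜ.indicator 1 * Λ) * Vᵀ := by
    rw [one_sub_submatrix_id_mul_transpose_submatrix_id hV hf, hA,
      mul_diagonal_mul_transpose_mul_mul_diagonal_mul_transpose hV]
  rw [hQA]
  refine l2_opNorm_mul_diagonal_mul_transpose_le hV (norm_nonneg _) fun i => ?_
  by_cases hi : i ∈ Set.range f
  · simp [hi]
  · simpa [hi] using abs_le_l2_opNorm_sub_of_notMem_range hP hV hA hf hleading hi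

theorem exists_mul_eq_mul_transpose_and_l2_opNorm_le [Fintype m] [DecidableEq m] [Fintype l]
    [DecidableEq l] {U : Matrix m l ℝ} (hU : Uᵀ * U = 1) {D : Matrix l l ℝ} (hD : D.IsDiag)
    {γ : ℝ} (hγ : 0 < γ) (hDγ : ∀ k, γ ≤ |D k k|) :
    ∃ R : Matrix m m ℝ, U * D * Uᵀ * R = U * Uᵀ ∧ ‖R‖ ≤ γ⁻¹ := by
  have hDD : diag D * (diag D)⁻¹ = fun _ => 1 :=
    funext fun k => mul_inv_cancel₀ (abs_pos.mp (hγ.trans_le (hDγ k)))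
  refine ⟨U * diagonal (diag D)⁻¹ * Uᵀ, ?_, ?_⟩
  · nth_rw 1 [← hD.diagonal_diag]
    rw [mul_diagonal_mul_transpose_mul_mul_diagonal_mul_transpose hU, hDD,
      diagonal_one, Matrix.mul_one]
  · exact l2_opNorm_mul_diagonal_mul_transpose_le hU (by positivity)
      fun k => by simpa [abs_inv] using inv_anti₀ hγ (hDγ k)

end Matrix

theorem stmt7_general (n K : ℕ) (γ : ℝ) (hγ : 0 < γ)
    (P A : Matrix (Fin n) (Fin n) ℝ)
    -- rank-K eigendecomposition of P with all nonzero eigenvalues ≥ γ in absolute value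
    (U : Matrix (Fin n) (Fin K) ℝ) (D : Matrix (Fin K) (Fin K) ℝ)
    (hUorth : Uᵀ * U = 1)
    (hDdiag : ∀ k l, k ≠ l → D k l = 0)
    (hDγ : ∀ k, γ ≤ |D k k|)
    (hP : P = U * D * Uᵀ)
    -- full orthogonal eigendecomposition of A
    (V : Matrix (Fin n) (Fin n) ℝ) (Λ : Fin n → ℝ)
    (hVorth : Vᵀ * V = 1)
    (hAV : A = V * Matrix.diagonal Λ * Vᵀ)
    -- Û consists of the K leading eigenvectors of A (largest absolute eigenvalues)
    (f : Fin K → Fin n) (hf : Function.Injective f)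
    (hleading : ∀ (k : Fin K) (j : Fin n), j ∉ Set.range f → |Λ j| ≤ |Λ (f k)|)
    (Uhat : Matrix (Fin n) (Fin K) ℝ) (hUhat : Uhat = V.submatrix id f) :
    specNorm ((1 - Uhat * Uhatᵀ) * (U * Uᵀ)) ≤ 2 * specNorm (A - P) / γ := by
  rw [specNorm_eq_l2_opNorm, specNorm_eq_l2_opNorm]
  subst hUhat
  set Q := 1 - V.submatrix id f * (V.submatrix id f)ᵀ
  obtain ⟨R, hPR, hR⟩ := exists_mul_eq_mul_transpose_and_l2_opNorm_le hUorth
    (fun k l h => hDdiag k l h) hγ hDγ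
  have hQA : ‖Q * A‖ ≤ ‖A - P‖ :=
    l2_opNorm_one_sub_submatrix_id_mul_transpose_mul_le hP hVorth hAV hf hleading
  have hQ : ‖Q‖ ≤ 1 := l2_opNorm_one_sub_submatrix_id_mul_transpose_le_one hVorth hf
  calc ‖Q * (U * Uᵀ)‖ = ‖Q * A * R - Q * (A - P) * R‖ := by rw [← hPR, ← hP]; noncomm_ring
    _ ≤ ‖Q * A‖ * ‖R‖ + ‖Q‖ * ‖A - P‖ * ‖R‖ := by
        refine (norm_sub_le _ _).trans (add_le_add (norm_mul_le _ _) ?_)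
        exact (norm_mul_le _ _).trans (by gcongr; exact norm_mul_le _ _)
    _ ≤ ‖A - P‖ * γ⁻¹ + 1 * ‖A - P‖ * γ⁻¹ := by gcongr
    _ = 2 * ‖A - P‖ / γ := by ring

/-- Davis–Kahan step: projection distance bound under small perturbation. -/
theorem stmt7 (n K : ℕ) (γ : ℝ) (hγ : 0 < γ)
    (P A : Matrix (Fin n) (Fin n) ℝ) (hAsymm : A.IsSymm) (hPsymm : P.IsSymm)
    -- rank-K eigendecomposition of P with all nonzero eigenvalues ≥ γ in absolute value
    (U : Matrix (Fin n) (Fin K) ℝ) (D : Matrix (Fin K) (Fin K) ℝ)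
    (hUorth : Uᵀ * U = 1)
    (hDdiag : ∀ k l, k ≠ l → D k l = 0)
    (hDγ : ∀ k, γ ≤ |D k k|)
    (hP : P = U * D * Uᵀ)
    -- full orthogonal eigendecomposition of A
    (V : Matrix (Fin n) (Fin n) ℝ) (Λ : Fin n → ℝ)
    (hVorth : Vᵀ * V = 1)
    (hAV : A = V * Matrix.diagonal Λ * Vᵀ)
    -- Û consists of the K leading eigenvectors of A (largest absolute eigenvalues)
    (f : Fin K → Fin n) (hf : Function.Injective f)
    (hleading : ∀ (k : Fin K) (j : Fin n), j ∉ Set.range f → |Λ j| ≤ |Λ (f k)|)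
    (Uhat : Matrix (Fin n) (Fin K) ℝ) (hUhat : Uhat = V.submatrix id f)
    (hsmall : specNorm (A - P) ≤ γ / 2) :
    specNorm ((1 - Uhat * Uhatᵀ) * (U * Uᵀ)) ≤ 2 * specNorm (A - P) / γ :=
  stmt7_general n K γ hγ P A U D hUorth hDdiag hDγ hP V Λ hVorth hAV f hf hleading Uhat hUhat
end

section
/- In the setting of the approximate k-means error bound (U = ΘX, Ū = Θ̂X̂ a (1+ε)-approximate k-means solution for Û, δ_k ≤ min_{ℓ≠k}‖X_{ℓ*}−X_{k*}‖, S_k = {i ∈ G_k : ‖Ū_{i*}−U_{i*}‖ ≥ δ_k/2}), if additionally (16+8ε)‖Û − U‖_F²/δ_k² < n_k for all k, then there exists a K×K permutation matrix J such that Θ̂_{G*} = Θ_{G*}J, where G = ∪_{k=1}^K (G_k \ S_k). -/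
/-!
Since `Ū` is a `(1+ε)`-approximate minimiser and `U` itself is a feasible k-means solution,
`‖Ū - Û‖_F² ≤ (1+ε)‖Û - U‖_F²`, hence `‖Ū - U‖_F² ≤ (4+2ε)‖Û - U‖_F²`. Every row of `S_k`
contributes at least `(δ_k/2)²` to this, so `|S_k| < n_k` and each community keeps a row outside
`S_k`. A row `i` outside `S_{g i}` has its estimated centre within `δ_{g i}/2` of its true centre,
and true centres are `δ`-separated, so on `G` the estimated label determines the true one.
Choosing one such row per community gives an injection of labels, i.e. a permutation.
-/

open Matrix

/-- The membership matrix associated with a community assignment `g`. -/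
def memMat {n K : ℕ} (g : Fin n → Fin K) : Matrix (Fin n) (Fin K) ℝ :=
  Matrix.of fun i k => if g i = k then 1 else 0

/-- Squared Frobenius norm. -/
noncomputable def frobSq {n K : ℕ} (M : Matrix (Fin n) (Fin K) ℝ) : ℝ :=
  ∑ i, ∑ j, (M i j) ^ 2

lemma memMat_mul_apply {n K : ℕ} (g : Fin n → Fin K) (X : Matrix (Fin K) (Fin K) ℝ)
    (i : Fin n) (j : Fin K) : (memMat g * X) i j = X (g i) j := by
  simp [memMat, Matrix.mul_apply]

lemma frobSq_sub_comm {n K : ℕ} (A B : Matrix (Fin n) (Fin K) ℝ) :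
    frobSq (A - B) = frobSq (B - A) := by
  simp only [frobSq, Matrix.sub_apply]
  exact Finset.sum_congr rfl fun i _ => Finset.sum_congr rfl fun j _ => by ring

lemma frobSq_sub_le {n K : ℕ} (A B C : Matrix (Fin n) (Fin K) ℝ) :
    frobSq (A - C) ≤ 2 * frobSq (A - B) + 2 * frobSq (B - C) := by
  simp only [frobSq, Matrix.sub_apply, Finset.mul_sum, ← Finset.sum_add_distrib]
  gcongr with i _ j _
  nlinarith [sq_nonneg (A i j - 2 * B i j + C i j)]

lemma card_mul_sq_le_frobSq {n K : ℕ} (M : Matrix (Fin n) (Fin K) ℝ) (s : Finset (Fin n))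
    {t : ℝ} (ht : 0 ≤ t) (hs : ∀ i ∈ s, t ≤ √(∑ j, M i j ^ 2)) :
    (s.card : ℝ) * t ^ 2 ≤ frobSq M := by
  calc (s.card : ℝ) * t ^ 2 = ∑ _i ∈ s, t ^ 2 := by rw [Finset.sum_const, nsmul_eq_mul]
    _ ≤ ∑ i ∈ s, ∑ j, M i j ^ 2 := Finset.sum_le_sum fun i hi =>
        (Real.le_sqrt ht (by positivity)).1 (hs i hi)
    _ ≤ ∑ i, ∑ j, M i j ^ 2 :=
        Finset.sum_le_sum_of_subset_of_nonneg (Finset.subset_univ _) fun i _ _ => by positivity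

lemma sqrt_sum_sub_sq_eq_dist {K : ℕ} (a b : Fin K → ℝ) :
    √(∑ j, (a j - b j) ^ 2) =
      dist (WithLp.toLp 2 a : EuclideanSpace ℝ (Fin K)) (WithLp.toLp 2 b) := by
  simp only [EuclideanSpace.dist_eq, Real.dist_eq, sq_abs]

lemma eq_of_dist_lt_half_of_separated {E ι : Type*} [PseudoMetricSpace E] (c : ι → E)
    (δ : ι → ℝ) (hδ : ∀ k l, l ≠ k → δ k ≤ dist (c l) (c k)) {x : E} {k l : ι}
    (hk : dist x (c k) < δ k / 2) (hl : dist x (c l) < δ l / 2) : k = l := by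
  by_contra hkl
  have hlk := hδ k l (Ne.symm hkl)
  have hkl' := hδ l k hkl
  rw [dist_comm] at hkl'
  linarith [dist_triangle_left (c l) (c k) x]

lemma exists_perm_of_injOn_of_surjOn {α ι : Type*} [Finite ι] (g ĝ : α → ι) (G : Set α)
    (hsurj : ∀ k, ∃ i ∈ G, g i = k) (hsep : ∀ i ∈ G, ∀ i' ∈ G, ĝ i = ĝ i' → g i = g i') :
    ∃ σ : Equiv.Perm ι, ∀ i ∈ G, ĝ i = σ (g i) := by
  choose t htG hgt using hsurj
  have hinj : Function.Injective (ĝ ∘ t) := fun k l h => by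
    simpa only [hgt] using hsep (t k) (htG k) (t l) (htG l) h
  have hbij := Finite.injective_iff_bijective.mp hinj
  refine ⟨Equiv.ofBijective _ hbij, fun i hi => ?_⟩
  obtain ⟨k, hk⟩ := hbij.2 (ĝ i)
  have hgi : g i = k := by simpa only [hgt] using hsep i hi (t k) (htG k) hk.symm
  rw [hgi]
  exact hk.symm

theorem stmt10_general (n K : ℕ) (ε : ℝ)
    (Uhat U : Matrix (Fin n) (Fin K) ℝ)
    (g : Fin n → Fin K) (X : Matrix (Fin K) (Fin K) ℝ)
    (hU : U = memMat g * X)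
    (nk : Fin K → ℕ)
    (hnk : ∀ k, nk k = (Finset.univ.filter (fun i => g i = k)).card)
    (ghat : Fin n → Fin K) (Xhat : Matrix (Fin K) (Fin K) ℝ)
    (happrox : ∀ (g' : Fin n → Fin K) (X' : Matrix (Fin K) (Fin K) ℝ),
      frobSq (memMat ghat * Xhat - Uhat) ≤ (1 + ε) * frobSq (memMat g' * X' - Uhat))
    (Ubar : Matrix (Fin n) (Fin K) ℝ) (hUbar : Ubar = memMat ghat * Xhat)
    (δ : Fin K → ℝ) (hδpos : ∀ k, 0 < δ k)
    (hδ : ∀ k l : Fin K, l ≠ k → δ k ≤ Real.sqrt (∑ j, (X l j - X k j) ^ 2))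
    (S : Fin K → Finset (Fin n))
    (hS : ∀ k, S k = Finset.univ.filter
      (fun i => g i = k ∧ δ k / 2 ≤ Real.sqrt (∑ j, (Ubar i j - U i j) ^ 2)))
    (hcond : ∀ k, (16 + 8 * ε) * frobSq (Uhat - U) / δ k ^ 2 < (nk k : ℝ)) :
    ∃ σ : Equiv.Perm (Fin K), ∀ i : Fin n, i ∉ S (g i) → ghat i = σ (g i) := by
  have hUbarU : frobSq (Ubar - U) ≤ (4 + 2 * ε) * frobSq (Uhat - U) := by
    have hopt := happrox g X
    rw [← hU, ← hUbar, frobSq_sub_comm U] at hopt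
    linarith [frobSq_sub_le Ubar Uhat U]
  have hsurvivor : ∀ k, ∃ i ∈ {i | i ∉ S (g i)}, g i = k := by
    intro k
    have hcard : (S k).card < nk k := by
      have hS_le := card_mul_sq_le_frobSq (Ubar - U) (S k) (half_pos (hδpos k)).le fun i hi => by
        rw [hS, Finset.mem_filter] at hi
        exact hi.2.2
      have hδsq : 0 < δ k ^ 2 := pow_pos (hδpos k) 2
      have hc := (div_lt_iff₀ hδsq).1 (hcond k)
      have hlt : ((S k).card : ℝ) * δ k ^ 2 < nk k * δ k ^ 2 := by nlinarith
      exact_mod_cast lt_of_mul_lt_mul_right hlt hδsq.le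
    obtain ⟨i, hi, hiS⟩ := Finset.exists_mem_notMem_of_card_lt_card (hnk k ▸ hcard)
    obtain rfl := (Finset.mem_filter.1 hi).2
    exact ⟨i, hiS, rfl⟩
  refine exists_perm_of_injOn_of_surjOn g ghat _ hsurvivor fun i hi i' hi' h => ?_
  set c : Fin K → EuclideanSpace ℝ (Fin K) := fun k => WithLp.toLp 2 (X k)
  have hsepc : ∀ k l, l ≠ k → δ k ≤ dist (c l) (c k) := fun k l hlk =>
    (sqrt_sum_sub_sq_eq_dist (X l) (X k)) ▸ hδ k l hlk
  have hclose : ∀ i, i ∉ S (g i) →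
      dist (WithLp.toLp 2 (Xhat (ghat i)) : EuclideanSpace ℝ (Fin K)) (c (g i)) < δ (g i) / 2 := by
    intro i hi
    simpa [hS, ← sqrt_sum_sub_sq_eq_dist, hUbar, hU, memMat_mul_apply, c] using hi
  exact eq_of_dist_lt_half_of_separated c δ hsepc (hclose i hi) (h ▸ hclose i' hi')

/-- Approximate k-means error bound, second part: exact recovery
outside the sets S_k, up to a permutation of community labels. -/
theorem stmt10 (n K : ℕ) (ε : ℝ) (hε : 0 < ε)
    (Uhat U : Matrix (Fin n) (Fin K) ℝ)
    (g : Fin n → Fin K) (X : Matrix (Fin K) (Fin K) ℝ)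
    (hU : U = memMat g * X)
    (nk : Fin K → ℕ)
    (hnk : ∀ k, nk k = (Finset.univ.filter (fun i => g i = k)).card)
    (ghat : Fin n → Fin K) (Xhat : Matrix (Fin K) (Fin K) ℝ)
    (happrox : ∀ (g' : Fin n → Fin K) (X' : Matrix (Fin K) (Fin K) ℝ),
      frobSq (memMat ghat * Xhat - Uhat) ≤ (1 + ε) * frobSq (memMat g' * X' - Uhat))
    (Ubar : Matrix (Fin n) (Fin K) ℝ) (hUbar : Ubar = memMat ghat * Xhat)
    (δ : Fin K → ℝ) (hδpos : ∀ k, 0 < δ k)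
    (hδ : ∀ k l : Fin K, l ≠ k → δ k ≤ Real.sqrt (∑ j, (X l j - X k j) ^ 2))
    (S : Fin K → Finset (Fin n))
    (hS : ∀ k, S k = Finset.univ.filter
      (fun i => g i = k ∧ δ k / 2 ≤ Real.sqrt (∑ j, (Ubar i j - U i j) ^ 2)))
    (hcond : ∀ k, (16 + 8 * ε) * frobSq (Uhat - U) / δ k ^ 2 < (nk k : ℝ)) :
    ∃ σ : Equiv.Perm (Fin K), ∀ i : Fin n, i ∉ S (g i) → ghat i = σ (g i) :=
  stmt10_general n K ε Uhat U g X hU nk hnk ghat Xhat happrox Ubar hUbar δ hδpos hδ S hS hcond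
end

section
/- Let Û, U ∈ ℝ^{n×K}, with all rows of U nonzero, and let I_+ = {i : Û_{i*} ≠ 0}. Let Û' be the matrix with rows Û_{i*}/‖Û_{i*}‖ for i ∈ I_+, and U'' the matrix with rows U_{i*}/‖U_{i*}‖ for i ∈ I_+. Then ‖Û' − U''‖_{2,1} ≤ 2 √( ‖Û − U‖_F² · Σ_{i=1}^n ‖U_{i*}‖^{-2} ), where ‖M‖_{2,1} = Σ_i ‖M_{i*}‖ is the sum of row Euclidean norms. -/
/-!
Row by row, `u/‖u‖ - v/‖v‖ = ‖v‖⁻¹ • ((‖v‖ - ‖u‖) • u/‖u‖ + (u - v))`, and both summands have norm at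
most `‖u - v‖`, so `‖u/‖u‖ - v/‖v‖‖ ≤ 2‖u - v‖/‖v‖`. Summing over the rows and applying
Cauchy–Schwarz to `∑ᵢ ‖Ûᵢ - Uᵢ‖ · ‖Uᵢ‖⁻¹` gives the bound.
-/

open Matrix

/-- Euclidean norm of a row vector. -/
noncomputable def rowNorm {K : ℕ} (v : Fin K → ℝ) : ℝ :=
  Real.sqrt (∑ j, (v j) ^ 2)

open NormedSpace

section Normalize

variable {V : Type*} [NormedAddCommGroup V] [NormedSpace ℝ V]

lemma norm_normalize_le (u : V) : ‖normalize u‖ ≤ 1 := by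
  rcases eq_or_ne u 0 with rfl | hu
  · simp [normalize_zero_eq_zero]
  · exact (norm_normalize hu).le

lemma norm_normalize_sub_normalize_le (u : V) {v : V} (hv : v ≠ 0) :
    ‖normalize u - normalize v‖ ≤ 2 * ‖u - v‖ / ‖v‖ := by
  have hv' : 0 < ‖v‖ := norm_pos_iff.mpr hv
  have hscale : ‖‖v‖ • normalize u - u‖ ≤ ‖u - v‖ := by
    calc ‖‖v‖ • normalize u - u‖ = |‖v‖ - ‖u‖| * ‖normalize u‖ := by
          rw [← Real.norm_eq_abs, ← norm_smul, sub_smul, norm_smul_normalize]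
      _ ≤ ‖v - u‖ * 1 := by
          gcongr
          exacts [abs_norm_sub_norm_le v u, norm_normalize_le u]
      _ = ‖u - v‖ := by rw [mul_one, norm_sub_rev]
  have hsplit : normalize u - normalize v = ‖v‖⁻¹ • ((‖v‖ • normalize u - u) + (u - v)) := by
    rw [smul_add, smul_sub, smul_sub, inv_smul_smul₀ hv'.ne', NormedSpace.normalize]
    abel
  calc ‖normalize u - normalize v‖ ≤ ‖v‖⁻¹ * (‖u - v‖ + ‖u - v‖) := by
        rw [hsplit, norm_smul, norm_inv, norm_norm]
        gcongr
        exact (norm_add_le _ _).trans (add_le_add_left hscale _)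
    _ = 2 * ‖u - v‖ / ‖v‖ := by ring

end Normalize

lemma rowNorm_eq_norm_toLp {K : ℕ} (v : Fin K → ℝ) : rowNorm v = ‖WithLp.toLp 2 v‖ := by
  simp [rowNorm, EuclideanSpace.norm_eq]

lemma rowNorm_div_sub_div_le {K : ℕ} (u : Fin K → ℝ) {v : Fin K → ℝ} (hv : v ≠ 0) :
    rowNorm (fun j => u j / rowNorm u - v j / rowNorm v) ≤ 2 * rowNorm (u - v) / rowNorm v := by
  have hrow : (fun j => u j / rowNorm u - v j / rowNorm v)
      = WithLp.ofLp (normalize (WithLp.toLp 2 u) - normalize (WithLp.toLp 2 v)) := by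
    ext j
    simp [NormedSpace.normalize, rowNorm_eq_norm_toLp, div_eq_inv_mul]
  rw [hrow, rowNorm_eq_norm_toLp, rowNorm_eq_norm_toLp, rowNorm_eq_norm_toLp]
  exact norm_normalize_sub_normalize_le _ (by simpa using hv)

lemma rowNorm_nonneg {K : ℕ} (v : Fin K → ℝ) : 0 ≤ rowNorm v :=
  Real.sqrt_nonneg _

lemma sum_rowNorm_mul_inv_rowNorm_le {n K : ℕ} (A B : Matrix (Fin n) (Fin K) ℝ) :
    ∑ i, rowNorm (A i) * (rowNorm (B i))⁻¹ ≤ √(frobSq A * ∑ i, (∑ j, B i j ^ 2)⁻¹) := by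
  rw [Real.sqrt_mul' _ (by positivity)]
  simpa only [rowNorm, frobSq, ← Real.sqrt_inv] using
    Real.sum_sqrt_mul_sqrt_le Finset.univ (fun i => by positivity) (fun i => by positivity)

theorem stmt13_general (n K : ℕ) (Uhat U : Matrix (Fin n) (Fin K) ℝ)
    (hU : ∀ i, ∃ j, U i j ≠ 0)
    (Iplus : Finset (Fin n)) :
    ∑ i ∈ Iplus,
        rowNorm (fun j => Uhat i j / rowNorm (Uhat i) - U i j / rowNorm (U i))
      ≤ 2 * Real.sqrt (frobSq (Uhat - U) * ∑ i, (∑ j, (U i j) ^ 2)⁻¹) := by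
  have hrow (i : Fin n) :
      rowNorm (fun j => Uhat i j / rowNorm (Uhat i) - U i j / rowNorm (U i))
        ≤ 2 * (rowNorm (Uhat i - U i) * (rowNorm (U i))⁻¹) := by
    obtain ⟨j, hj⟩ := hU i
    refine (rowNorm_div_sub_div_le (Uhat i) fun h => hj (congrFun h j)).trans_eq ?_
    ring
  calc _ ≤ ∑ i ∈ Iplus, 2 * (rowNorm (Uhat i - U i) * (rowNorm (U i))⁻¹) :=
        Finset.sum_le_sum fun i _ => hrow i
    _ ≤ ∑ i, 2 * (rowNorm (Uhat i - U i) * (rowNorm (U i))⁻¹) :=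
        Finset.sum_le_univ_sum_of_nonneg fun i =>
          mul_nonneg zero_le_two (mul_nonneg (rowNorm_nonneg _) (inv_nonneg.2 (rowNorm_nonneg _)))
    _ = 2 * ∑ i, rowNorm ((Uhat - U) i) * (rowNorm (U i))⁻¹ := (Finset.mul_sum _ _ _).symm
    _ ≤ _ := by gcongr; exact sum_rowNorm_mul_inv_rowNorm_le (Uhat - U) U

/-- (2,1)-norm bound for row-normalized matrices. -/
theorem stmt13 (n K : ℕ) (Uhat U : Matrix (Fin n) (Fin K) ℝ)
    (hU : ∀ i, ∃ j, U i j ≠ 0)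
    (Iplus : Finset (Fin n))
    (hIplus : ∀ i, i ∈ Iplus ↔ ∃ j, Uhat i j ≠ 0) :
    ∑ i ∈ Iplus,
        rowNorm (fun j => Uhat i j / rowNorm (Uhat i) - U i j / rowNorm (U i))
      ≤ 2 * Real.sqrt (frobSq (Uhat - U) * ∑ i, (∑ j, (U i j) ^ 2)⁻¹) :=
  stmt13_general n K Uhat U hU Iplus
end

section
/- Let Θ be an n×K membership matrix with community sizes n_1,...,n_K, B = α(λ I_K + (1−λ)𝟏𝟏^T) with α > 0 and 0 < λ < 1, and P = ΘBΘ^T. Then the smallest nonzero eigenvalue of P is at least n_min · α · λ, where n_min = min_k n_k. -/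
/-!
If `P v = μ v` with `μ ≠ 0`, then `v = Θ w` with `w = μ⁻¹ B Θᵀ v`, so `v` is constant on
communities and `u := Θᵀ v` has entries `n_k w_k`. Hence `μ ‖v‖² = uᵀ B u`, and
`uᵀ B u = αλ ‖u‖² + α(1-λ)(∑ u_k)² ≥ αλ ∑ n_k² w_k² ≥ αλ n_min ∑ n_k w_k² = αλ n_min ‖v‖²`.
-/

open Matrix Finset

def membershipMatrix {ι κ R : Type*} [DecidableEq κ] [Zero R] [One R] (g : ι → κ) :
    Matrix ι κ R :=
  of fun i k => if g i = k then 1 else 0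

section Membership

variable {ι κ R : Type*} [DecidableEq κ] [NonAssocSemiring R] (g : ι → κ)

theorem membershipMatrix_mulVec [Fintype κ] (x : κ → R) : membershipMatrix g *ᵥ x = x ∘ g := by
  ext i
  simp [membershipMatrix, mulVec, dotProduct]

theorem membershipMatrix_transpose_mulVec_comp [Fintype ι] (w : κ → R) :
    (membershipMatrix g)ᵀ *ᵥ (w ∘ g) = fun k => #{i | g i = k} * w k := by
  ext k
  simp only [mulVec, dotProduct, transpose_apply, membershipMatrix, of_apply, ite_mul, one_mul,
    zero_mul, Function.comp_apply]
  rw [← sum_filter, sum_congr rfl fun i hi => by rw [(mem_filter.mp hi).2], sum_const,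
    nsmul_eq_mul]

end Membership

theorem dotProduct_mulVec_smul_one_add_ones {κ R : Type*} [Fintype κ] [DecidableEq κ]
    [CommRing R] (α lam : R) (u : κ → R) :
    u ⬝ᵥ (α • (lam • (1 : Matrix κ κ R) + (1 - lam) • of fun _ _ => (1 : R))) *ᵥ u
      = α * lam * (u ⬝ᵥ u) + α * (1 - lam) * (∑ k, u k) ^ 2 := by
  have hones : (of fun _ _ => (1 : R) : Matrix κ κ R) *ᵥ u = fun _ => ∑ k, u k := by
    ext; simp [mulVec, dotProduct]
  simp only [smul_mulVec, add_mulVec, one_mulVec, hones, dotProduct_smul, dotProduct_add,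
    smul_eq_mul]
  simp only [dotProduct, sum_mul, sq]
  ring

theorem mul_dotProduct_mul_le {κ R : Type*} [Fintype κ] [CommRing R] [LinearOrder R]
    [IsStrictOrderedRing R] {c : R} {d : κ → R} (hc : 0 ≤ c) (hd : ∀ k, c ≤ d k) (w : κ → R) :
    c * (w ⬝ᵥ (d * w)) ≤ (d * w) ⬝ᵥ (d * w) := by
  rw [dotProduct, mul_sum]
  refine sum_le_sum fun k _ => ?_
  have := mul_le_mul_of_nonneg_right (hd k) (mul_nonneg (hc.trans (hd k)) (sq_nonneg (w k)))
  simpa only [Pi.mul_apply, sq, mul_assoc, mul_left_comm, mul_comm] using this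

theorem stmt16_general (n K : ℕ) (g : Fin n → Fin K)
    (Θ : Matrix (Fin n) (Fin K) ℝ)
    (hΘ : ∀ i k, Θ i k = if g i = k then 1 else 0)
    (nk : Fin K → ℕ)
    (hnk : ∀ k, nk k = (Finset.univ.filter (fun i => g i = k)).card)
    (nmin : ℕ) (hmin : ∀ k, nmin ≤ nk k)
    (α lam : ℝ) (hα : 0 < α) (hlam0 : 0 < lam) (hlam1 : lam < 1)
    (B : Matrix (Fin K) (Fin K) ℝ)
    (hB : B = α • (lam • (1 : Matrix (Fin K) (Fin K) ℝ)
        + (1 - lam) • (Matrix.of fun _ _ => (1 : ℝ))))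
    (P : Matrix (Fin n) (Fin n) ℝ) (hP : P = Θ * B * Θᵀ) :
    ∀ (μ : ℝ) (v : Fin n → ℝ), v ≠ 0 → P.mulVec v = μ • v → μ ≠ 0 →
      (nmin : ℝ) * α * lam ≤ μ := by
  intro μ v hv hev hμ
  have hΘg : Θ = membershipMatrix g := ext hΘ
  set u := Θᵀ *ᵥ v with hu
  set w := μ⁻¹ • B *ᵥ u with hw
  have hvw : v = w ∘ g := by
    rw [← membershipMatrix_mulVec, ← hΘg, hw, hu, mulVec_smul, mulVec_mulVec, mulVec_mulVec, ← hP,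
      hev, inv_smul_smul₀ hμ]
  have huw : u = (fun k => (nk k : ℝ)) * w := by
    rw [hu, hvw, hΘg, membershipMatrix_transpose_mulVec_comp]
    ext k; simp [hnk]
  have hvv : v ⬝ᵥ v = w ⬝ᵥ u := by
    calc v ⬝ᵥ v = (Θ *ᵥ w) ⬝ᵥ v := by rw [hΘg, membershipMatrix_mulVec, ← hvw]
      _ = w ⬝ᵥ u := by rw [dotProduct_comm, dotProduct_mulVec, ← mulVec_transpose, dotProduct_comm]
  have hquad : μ * (v ⬝ᵥ v) = α * lam * (u ⬝ᵥ u) + α * (1 - lam) * (∑ k, u k) ^ 2 := by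
    rw [← dotProduct_mulVec_smul_one_add_ones, ← hB, ← smul_eq_mul, ← dotProduct_smul, ← hev, hP,
      ← mulVec_mulVec, ← mulVec_mulVec, dotProduct_mulVec, ← mulVec_transpose]
  have hu : (nmin : ℝ) * (v ⬝ᵥ v) ≤ u ⬝ᵥ u := by
    rw [hvv, huw]
    exact mul_dotProduct_mul_le (Nat.cast_nonneg _) (fun k => Nat.cast_le.mpr (hmin k)) w
  have hvpos : 0 < v ⬝ᵥ v := by simpa using dotProduct_self_star_pos_iff.mpr hv
  refine le_of_mul_le_mul_right ?_ hvpos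
  rw [hquad]
  linarith [mul_le_mul_of_nonneg_left hu (mul_pos hα hlam0).le,
    mul_nonneg (mul_nonneg hα.le (sub_nonneg.mpr hlam1.le)) (sq_nonneg (∑ k, u k))]

/-- Smallest nonzero eigenvalue of P = ΘBΘᵀ for
B = α(λI + (1−λ)𝟏𝟏ᵀ) is at least n_min·α·λ. -/
theorem stmt16 (n K : ℕ) (hK : 0 < K) (g : Fin n → Fin K)
    (Θ : Matrix (Fin n) (Fin K) ℝ)
    (hΘ : ∀ i k, Θ i k = if g i = k then 1 else 0)
    (nk : Fin K → ℕ)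
    (hnk : ∀ k, nk k = (Finset.univ.filter (fun i => g i = k)).card)
    (nmin : ℕ) (hmin : ∀ k, nmin ≤ nk k) (hmem : ∃ k, nmin = nk k)
    (α lam : ℝ) (hα : 0 < α) (hlam0 : 0 < lam) (hlam1 : lam < 1)
    (B : Matrix (Fin K) (Fin K) ℝ)
    (hB : B = α • (lam • (1 : Matrix (Fin K) (Fin K) ℝ)
        + (1 - lam) • (Matrix.of fun _ _ => (1 : ℝ))))
    (P : Matrix (Fin n) (Fin n) ℝ) (hP : P = Θ * B * Θᵀ) :
    ∀ (μ : ℝ) (v : Fin n → ℝ), v ≠ 0 → P.mulVec v = μ • v → μ ≠ 0 →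
      (nmin : ℝ) * α * lam ≤ μ :=
  stmt16_general n K g Θ hΘ nk hnk nmin hmin α lam hα hlam0 hlam1 B hB P hP
end
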